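/- arXiv:math/0606651 — 2 statements merged into one kernel-verified Lean document; each statement's English description precedes it below -/
import Mathlib

section
/- Let ι : A ⊆ X be a subspace inclusion and let Λ₀, Λ₁ be ℤᵗ-systems on X with the same twist (Λ₀(L) = Λ₁(L) for every loop L in X). Let ζ_A : ι*(Λ₀) → ι*(Λ₁) be a morphism of ℤᵗ-systems on A. Assume that every function A → {1,-1} that is constant on path components of A extends to a function X → {1,-1} that is constant on path components of X (i.e. H⁰(X;ℤ/2) → H⁰(A;ℤ/2) is onto). Then there exists a morphism ζ_X : Λ₀ → Λ₁ on X with ζ_X(a) = ζ_A(a) for all a ∈ A. -/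
open unitInterval

/-- A `ℤᵗ`-system on a topological space `X`: a functor from the fundamental
groupoid of `X` to the group `{1,-1} = ℤˣ`. -/
structure ZtSystem (X : Type*) [TopologicalSpace X] where
  val : ∀ {x y : X}, Path x y → ℤˣ
  homotopic_eq : ∀ {x y : X} {γ γ' : Path x y}, Path.Homotopic γ γ' → val γ = val γ'
  refl_eq : ∀ x : X, val (Path.refl x) = 1
  trans_eq : ∀ {x y z : X} (γ : Path x y) (δ : Path y z), val (γ.trans δ) = val γ * val δ

/-- A morphism `ζ : Λ₀ → Λ₁` of `ℤᵗ`-systems on `X`. -/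
def ZtSystem.IsMorphism {X : Type*} [TopologicalSpace X] (Λ₀ Λ₁ : ZtSystem X)
    (ζ : X → ℤˣ) : Prop :=
  ∀ {x y : X} (γ : Path x y), Λ₀.val γ * Λ₁.val γ = ζ x * ζ y

/-- Pullback of a `ℤᵗ`-system along a continuous map. -/
def ZtSystem.pullback {X Y : Type*} [TopologicalSpace X] [TopologicalSpace Y]
    (f : C(X, Y)) (Λ : ZtSystem Y) : ZtSystem X where
  val γ := Λ.val (γ.map f.continuous)
  homotopic_eq h := Λ.homotopic_eq (h.map f)
  refl_eq x := by
    show Λ.val ((Path.refl x).map f.continuous) = 1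
    rw [show (Path.refl x).map f.continuous = Path.refl (f x) from Path.ext rfl]
    exact Λ.refl_eq _
  trans_eq γ δ := by
    show Λ.val ((γ.trans δ).map f.continuous) = _
    rw [Path.map_trans]
    exact Λ.trans_eq _ _


section Aux

variable {X : Type*} [TopologicalSpace X]

private lemma ZtSystem.symm_val (Λ : ZtSystem X) {x y : X} (γ : Path x y) :
    Λ.val γ.symm = Λ.val γ := by
  have h1 : Λ.val (γ.trans γ.symm) = 1 := by
    rw [← Λ.refl_eq x]
    exact (Λ.homotopic_eq ⟨Path.Homotopy.reflTransSymm γ⟩).symm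
  have h2 := Λ.trans_eq γ γ.symm
  rw [h1] at h2
  have h3 : Λ.val γ * Λ.val γ = 1 := Int.units_mul_self _
  calc Λ.val γ.symm = (Λ.val γ * Λ.val γ) * Λ.val γ.symm := by rw [h3, one_mul]
    _ = Λ.val γ * (Λ.val γ * Λ.val γ.symm) := mul_assoc _ _ _
    _ = Λ.val γ := by rw [← h2, mul_one]

/-- `Λ₀γ * Λ₁γ` depends only on endpoints when twists agree. -/
private lemma d_well_defined (Λ₀ Λ₁ : ZtSystem X)
    (htwist : ∀ (x : X) (L : Path x x), Λ₀.val L = Λ₁.val L)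
    {x y : X} (γ γ' : Path x y) :
    Λ₀.val γ * Λ₁.val γ = Λ₀.val γ' * Λ₁.val γ' := by
  have h := htwist x (γ.trans γ'.symm)
  rw [Λ₀.trans_eq, Λ₁.trans_eq, Λ₀.symm_val, Λ₁.symm_val] at h
  have sq : ∀ u : ℤˣ, u * u = 1 := Int.units_mul_self
  calc Λ₀.val γ * Λ₁.val γ
      = (Λ₀.val γ * Λ₁.val γ) * ((Λ₀.val γ' * Λ₀.val γ') * (Λ₁.val γ' * Λ₁.val γ')) := by
        rw [sq, sq, one_mul, mul_one]
    _ = ((Λ₀.val γ * Λ₁.val γ) * (Λ₀.val γ' * Λ₁.val γ')) * (Λ₀.val γ' * Λ₁.val γ') := by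
        rw [mul_mul_mul_comm (Λ₀.val γ') (Λ₀.val γ') (Λ₁.val γ') (Λ₁.val γ'), ← mul_assoc]
    _ = ((Λ₀.val γ * Λ₀.val γ') * (Λ₁.val γ * Λ₁.val γ')) * (Λ₀.val γ' * Λ₁.val γ') := by
        rw [mul_mul_mul_comm (Λ₀.val γ) (Λ₁.val γ) (Λ₀.val γ') (Λ₁.val γ')]
    _ = Λ₀.val γ' * Λ₁.val γ' := by rw [h, sq, one_mul]

private noncomputable def dval (Λ₀ Λ₁ : ZtSystem X) {x y : X} (j : Joined x y) : ℤˣ :=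
  Λ₀.val j.somePath * Λ₁.val j.somePath

private lemma dval_path (Λ₀ Λ₁ : ZtSystem X)
    (htwist : ∀ (x : X) (L : Path x x), Λ₀.val L = Λ₁.val L)
    {x y : X} (γ : Path x y) (j : Joined x y) :
    Λ₀.val γ * Λ₁.val γ = dval Λ₀ Λ₁ j :=
  d_well_defined Λ₀ Λ₁ htwist γ j.somePath

private lemma dval_eq_of_eq (Λ₀ Λ₁ : ZtSystem X)
    (htwist : ∀ (x : X) (L : Path x x), Λ₀.val L = Λ₁.val L)
    {x x' y : X} (h : x = x') (j : Joined x y) (j' : Joined x' y) :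
    dval Λ₀ Λ₁ j = dval Λ₀ Λ₁ j' := by
  subst h
  exact d_well_defined Λ₀ Λ₁ htwist j.somePath j'.somePath

private lemma dval_split (Λ₀ Λ₁ : ZtSystem X)
    (htwist : ∀ (x : X) (L : Path x x), Λ₀.val L = Λ₁.val L)
    {b x y : X} (jx : Joined b x) (jy : Joined b y) (j : Joined x y) :
    dval Λ₀ Λ₁ j = dval Λ₀ Λ₁ jx * dval Λ₀ Λ₁ jy := by
  set P := jx.somePath
  set Q := jy.somePath
  have := dval_path Λ₀ Λ₁ htwist (P.symm.trans Q) j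
  rw [← this, Λ₀.trans_eq, Λ₁.trans_eq, Λ₀.symm_val, Λ₁.symm_val,
    mul_mul_mul_comm (Λ₀.val P) (Λ₀.val Q) (Λ₁.val P) (Λ₁.val Q)]
  rfl

end Aux

/-- If `Λ₀, Λ₁` on `X` have the same twist, a morphism between their
restrictions to `A` extends over `X`, provided `H⁰(X;ℤ/2) → H⁰(A;ℤ/2)` is
onto. -/
theorem extend_morphism_of_H0_surjective {X : Type*} [TopologicalSpace X]
    (A : Set X) (Λ₀ Λ₁ : ZtSystem X)
    (htwist : ∀ (x : X) (L : Path x x), Λ₀.val L = Λ₁.val L)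
    (ζA : A → ℤˣ)
    (hζA : (ZtSystem.pullback ⟨Subtype.val, continuous_subtype_val⟩ Λ₀).IsMorphism
      (ZtSystem.pullback ⟨Subtype.val, continuous_subtype_val⟩ Λ₁) ζA)
    (hsurj : ∀ g : A → ℤˣ, (∀ a a' : A, Joined a a' → g a = g a') →
      ∃ G : X → ℤˣ, (∀ x x' : X, Joined x x' → G x = G x') ∧ ∀ a : A, G a = g a) :
    ∃ ζX : X → ℤˣ, Λ₀.IsMorphism Λ₁ ζX ∧ ∀ a : A, ζX a = ζA a := by
  classical
  letI := pathSetoid X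
  have sq : ∀ u : ℤˣ, u * u = 1 := Int.units_mul_self
  have hrep : ∀ x : X, Joined (Quotient.out (Quotient.mk _ x)) x := fun x =>
    Quotient.mk_out x
  set ζ₀ : X → ℤˣ := fun x => dval Λ₀ Λ₁ (hrep x) with hζ₀
  have key : ∀ {x y : X} (γ : Path x y), Λ₀.val γ * Λ₁.val γ = ζ₀ x * ζ₀ y := by
    intro x y γ
    have hxy : (Quotient.mk (pathSetoid X) x) = Quotient.mk _ y := Quotient.sound ⟨γ⟩
    have hby : Joined (Quotient.out (Quotient.mk (pathSetoid X) x)) y :=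
      (hrep x).trans ⟨γ⟩
    have h1 : Λ₀.val γ * Λ₁.val γ = dval Λ₀ Λ₁ ⟨γ⟩ := dval_path Λ₀ Λ₁ htwist γ ⟨γ⟩
    have h2 : dval Λ₀ Λ₁ (⟨γ⟩ : Joined x y) = ζ₀ x * dval Λ₀ Λ₁ hby :=
      dval_split Λ₀ Λ₁ htwist (hrep x) hby ⟨γ⟩
    have h3 : dval Λ₀ Λ₁ hby = ζ₀ y :=
      dval_eq_of_eq Λ₀ Λ₁ htwist (congrArg Quotient.out hxy.symm).symm hby (hrep y)
    rw [h1, h2, h3]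
  set g : A → ℤˣ := fun a => ζA a * ζ₀ a with hg
  have hgconst : ∀ a a' : A, Joined a a' → g a = g a' := by
    rintro a a' ⟨γ⟩
    have h1 := hζA γ
    have h2 := key (γ.map continuous_subtype_val)
    have h3 : ζA a * ζA a' = ζ₀ (a : X) * ζ₀ (a' : X) := by
      rw [← h1]; exact h2
    have hone : g a * g a' = 1 := by
      show ζA a * ζ₀ (a : X) * (ζA a' * ζ₀ (a' : X)) = 1
      rw [mul_mul_mul_comm, h3, mul_mul_mul_comm, sq, sq, one_mul]
    calc g a = g a * (g a' * g a') := by rw [sq, mul_one]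
      _ = (g a * g a') * g a' := (mul_assoc _ _ _).symm
      _ = g a' := by rw [hone, one_mul]
  obtain ⟨G, hGconst, hGa⟩ := hsurj g hgconst
  refine ⟨fun x => G x * ζ₀ x, ?_, ?_⟩
  · intro x y γ
    show Λ₀.val γ * Λ₁.val γ = (G x * ζ₀ x) * (G y * ζ₀ y)
    rw [key γ, hGconst x y ⟨γ⟩, mul_mul_mul_comm, sq, one_mul]
  · intro a
    show G (a : X) * ζ₀ (a : X) = ζA a
    rw [hGa a]
    show ζA a * ζ₀ (a : X) * ζ₀ (a : X) = ζA a
    rw [mul_assoc, sq, mul_one]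
end

section
/- (Geometric form of Taylor's lemma) Let Ω be a homotopy functor from Zᵗ(Top) to a category D. Let (f,ζ) : (X,Λ_X) → (Y,Λ_Y) be a morphism in Zᵗ(Top) with X path-connected, and suppose F : X×[0,1] → Y is a continuous map with F∘ι₀ = F∘ι₁ = f. Fix x ∈ X and let L be the loop t ↦ F(x,t) in Y. If Λ_Y(L) = -1, then Ω(f,ζ) = Ω(f,ζ) ∘ Ω(1_X, -1_{Λ_X}), where (1_X, -1_{Λ_X}) is the endomorphism of (X,Λ_X) given by the identity map of X and the constant function -1. If instead Λ_Y(L) = +1, then this composite identity holds with the constant function +1, i.e. trivially. -/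
open unitInterval CategoryTheory

/-- An object of the category `Zᵗ(Top)`: a space together with a `ℤᵗ`-system. -/
structure ZtTop where
  carrier : Type*
  [inst : TopologicalSpace carrier]
  lam : ZtSystem carrier

attribute [instance] ZtTop.inst

/-- A morphism in `Zᵗ(Top)`. -/
@[ext]
structure ZtHom (A B : ZtTop) where
  f : C(A.carrier, B.carrier)
  ζ : A.carrier → ℤˣ
  isMor : ZtSystem.IsMorphism A.lam (ZtSystem.pullback f B.lam) ζ

instance : Category ZtTop where
  Hom := ZtHom
  id A := { f := ContinuousMap.id _, ζ := fun _ => 1,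
            isMor := by
              intro x y γ
              show A.lam.val γ * A.lam.val (γ.map continuous_id) = 1 * 1
              rw [Path.map_id, Int.units_mul_self, one_mul] }
  comp {A B C} u v :=
    { f := v.f.comp u.f
      ζ := fun x => v.ζ (u.f x) * u.ζ x
      isMor := by
        intro x y γ
        have h1 : A.lam.val γ * B.lam.val (γ.map u.f.continuous) = u.ζ x * u.ζ y := u.isMor γ
        have h2 : B.lam.val (γ.map u.f.continuous) *
            C.lam.val ((γ.map u.f.continuous).map v.f.continuous) =
            v.ζ (u.f x) * v.ζ (u.f y) := v.isMor (γ.map u.f.continuous)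
        show A.lam.val γ * C.lam.val (γ.map (v.f.comp u.f).continuous) = _
        have hmap : γ.map (v.f.comp u.f).continuous
            = (γ.map u.f.continuous).map v.f.continuous := by rw [Path.map_map]
        rw [hmap]
        have hb : B.lam.val (γ.map u.f.continuous) * B.lam.val (γ.map u.f.continuous) = 1 :=
          Int.units_mul_self _
        calc A.lam.val γ * C.lam.val ((γ.map u.f.continuous).map v.f.continuous)
            = (A.lam.val γ * B.lam.val (γ.map u.f.continuous)) *
              (B.lam.val (γ.map u.f.continuous) *
                C.lam.val ((γ.map u.f.continuous).map v.f.continuous)) := by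
              rw [mul_assoc (A.lam.val γ), ← mul_assoc (B.lam.val (γ.map u.f.continuous))
                (B.lam.val (γ.map u.f.continuous)), hb, one_mul]
          _ = (u.ζ x * u.ζ y) * (v.ζ (u.f x) * v.ζ (u.f y)) := by rw [h1, h2]
          _ = v.ζ (u.f x) * u.ζ x * (v.ζ (u.f y) * u.ζ y) := by
              rw [mul_mul_mul_comm, mul_comm (u.ζ x), mul_comm (u.ζ y)] }
  id_comp u := ZtHom.ext (ContinuousMap.comp_id _) (funext fun x => mul_one _)
  comp_id u := ZtHom.ext (ContinuousMap.id_comp _) (funext fun x => one_mul _)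
  assoc u v w := ZtHom.ext rfl (funext fun x => (mul_assoc _ _ _).symm)

/-- The `ℤᵗ`-system `Λ • θ_{[0,1]}` on `X × [0,1]`. -/
def ZtSystem.prodI {X : Type*} [TopologicalSpace X] (Λ : ZtSystem X) :
    ZtSystem (X × I) :=
  ZtSystem.pullback ⟨Prod.fst, continuous_fst⟩ Λ

/-- The path `s ↦ (x, s·t)` in `X × [0,1]` from `(x,0)` to `(x,t)`. -/
def Path.seg {X : Type*} [TopologicalSpace X] (x : X) (t : I) :
    Path ((x, 0) : X × I) (x, t) where
  toFun s := (x, ⟨s.1 * t.1, unitInterval.mul_mem s.2 t.2⟩)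
  continuous_toFun := by fun_prop
  source' := by
    refine Prod.ext rfl (Subtype.ext ?_)
    simp
  target' := by
    refine Prod.ext rfl (Subtype.ext ?_)
    simp

/-- The vertical path `t ↦ (x, t)` in `X × [0,1]` from `(x,0)` to `(x,1)`. -/
def Path.vert {X : Type*} [TopologicalSpace X] (x : X) :
    Path ((x, 0) : X × I) (x, 1) where
  toFun t := (x, t)
  continuous_toFun := by fun_prop
  source' := rfl
  target' := rfl

/-- The object `(X × [0,1], Λ • θ_{[0,1]})` of `Zᵗ(Top)`. -/
def ZtTop.prodI (A : ZtTop) : ZtTop :=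
  { carrier := A.carrier × I, lam := A.lam.prodI }

/-- The end inclusion `(ι_t, 1_Λ) : (X,Λ) → (X × [0,1], Λ • θ_{[0,1]})`. -/
def ZtTop.iota (A : ZtTop) (t : I) : A ⟶ A.prodI where
  f := ⟨fun x => (x, t), by fun_prop⟩
  ζ := fun _ => 1
  isMor := by
    intro x y γ
    show A.lam.val γ * A.lam.prodI.val (γ.map _) = 1 * 1
    have : A.lam.prodI.val (γ.map (Continuous.prodMk (f := fun x : A.carrier => x)
        (g := fun _ : A.carrier => t) continuous_id continuous_const)) = A.lam.val γ := by
      show A.lam.val ((γ.map _).map _) = _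
      rw [Path.map_map]
      congr 1
    rw [this, Int.units_mul_self, one_mul]

/-- The projection `(r, 1) : (X × [0,1], Λ • θ_{[0,1]}) → (X,Λ)`. -/
def ZtTop.proj (A : ZtTop) : A.prodI ⟶ A where
  f := ⟨Prod.fst, continuous_fst⟩
  ζ := fun _ => 1
  isMor := by
    intro p q μ
    show A.lam.prodI.val μ * A.lam.val (μ.map continuous_fst) = 1 * 1
    show A.lam.val (μ.map continuous_fst) * A.lam.val (μ.map continuous_fst) = 1 * 1
    rw [Int.units_mul_self, one_mul]

/-- A homotopy functor on `Zᵗ(Top)`. -/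
def IsHomotopyFunctor {D : Type*} [Category D] (Ω : Functor ZtTop D) : Prop :=
  ∀ A : ZtTop, Ω.map (A.proj) ≫ Ω.map (A.iota 0) = 𝟙 (Ω.obj A.prodI)

/-- The endomorphism `(1_X, -1_Λ)` of `(X, Λ)`. -/
def ZtTop.negId (A : ZtTop) : A ⟶ A where
  f := ContinuousMap.id _
  ζ := fun _ => -1
  isMor := by
    intro x y γ
    show A.lam.val γ * A.lam.val (γ.map continuous_id) = (-1 : ℤˣ) * (-1 : ℤˣ)
    rw [Path.map_id, Int.units_mul_self, neg_mul_neg, one_mul]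

/-- The involution on `Zᵗ(Top)`: `(f, ζ) ↦ (f, -ζ)`. -/
def ZtHom.neg {A B : ZtTop} (u : A ⟶ B) : A ⟶ B where
  f := u.f
  ζ := fun x => -(u.ζ x)
  isMor := by
    intro x y γ
    rw [neg_mul_neg]
    exact u.isMor γ

/-! The homotopy `F`, with the sign at `(x, t)` corrected by the value of `Λ_Y` on the track of
`x` up to time `t`, is a morphism `H : (X × [0,1], Λ_X • θ) ⟶ (Y, Λ_Y)`; this is because `[0,1]`
is simply connected, so a path in `X × [0,1]` is determined up to homotopy by its shadow in `X`.
Then `H ∘ ι₀ = (f, ζ)`, while `H ∘ ι₁ = (f, ζ) ∘ (1_X, -1)` as soon as the loop `t ↦ F(x, t)` has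
value `-1`, a value that does not depend on `x` because `X` is path connected. A homotopy functor
does not distinguish `ι₀` from `ι₁`, since both are sections of the projection `r`. -/

instance : ContractibleSpace I :=
  (convex_Icc (0 : ℝ) 1).contractibleSpace (Set.nonempty_Icc.mpr zero_le_one)

theorem Int.units_mul_eq_mul_swap {a b c d : ℤˣ} (h : a * b = c * d) : c * b = a * d :=
  calc c * b = c * b * (a * a) := by rw [Int.units_mul_self, mul_one]
    _ = c * (a * b) * a := by ac_rfl
    _ = c * c * d * a := by rw [h]; ac_rfl
    _ = a * d := by rw [Int.units_mul_self, one_mul, mul_comm]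

theorem Path.Homotopic.of_map_fst {X Y : Type*} [TopologicalSpace X] [TopologicalSpace Y]
    [SimplyConnectedSpace Y] {p q : X × Y} {μ ν : Path p q}
    (h : (μ.map continuous_fst).Homotopic (ν.map continuous_fst)) : μ.Homotopic ν := by
  have hsnd : (μ.map continuous_snd).Homotopic (ν.map continuous_snd) :=
    SimplyConnectedSpace.paths_homotopic _ _
  have hprod := Nonempty.map2 Path.Homotopic.prodHomotopy h hsnd
  rwa [show (μ.map continuous_fst).prod (μ.map continuous_snd) = μ from Path.ext rfl,
    show (ν.map continuous_fst).prod (ν.map continuous_snd) = ν from Path.ext rfl] at hprod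

theorem Path.seg_zero {X : Type*} [TopologicalSpace X] (x : X) :
    Path.seg x 0 = Path.refl (x, 0) :=
  Path.ext (funext fun _ => Prod.ext rfl (Subtype.ext (mul_zero _)))

theorem Path.seg_one {X : Type*} [TopologicalSpace X] (x : X) : Path.seg x 1 = Path.vert x :=
  Path.ext (funext fun _ => Prod.ext rfl (Subtype.ext (mul_one _)))

namespace ZtSystem

variable {X Y Z : Type*} [TopologicalSpace X] [TopologicalSpace Y] [TopologicalSpace Z]

theorem ext {Λ Λ' : ZtSystem X} (h : ∀ {x y : X} (γ : Path x y), Λ.val γ = Λ'.val γ) :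
    Λ = Λ' := by
  cases Λ; cases Λ'
  congr
  funext _ _ γ
  exact h γ

theorem val_congr (Λ : ZtSystem X) {x y x' y' : X} (hx : x = x') (hy : y = y')
    (γ : Path x y) (γ' : Path x' y') (h : ∀ t, γ t = γ' t) : Λ.val γ = Λ.val γ' := by
  subst hx hy
  rw [Path.ext (funext h)]

theorem pullback_pullback (Λ : ZtSystem Z) (g : C(Y, Z)) (f : C(X, Y)) :
    (Λ.pullback g).pullback f = Λ.pullback (g.comp f) :=
  ext fun _ => Λ.val_congr rfl rfl _ _ fun _ => rfl

theorem IsMorphism.pullback {Λ₀ Λ₁ : ZtSystem Y} {ζ : Y → ℤˣ} (h : IsMorphism Λ₀ Λ₁ ζ)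
    (f : C(X, Y)) : IsMorphism (Λ₀.pullback f) (Λ₁.pullback f) (ζ ∘ f) :=
  fun γ => h (γ.map f.continuous)

theorem IsMorphism.trans {Λ₀ Λ₁ Λ₂ : ZtSystem X} {ζ η : X → ℤˣ} (h₀₁ : IsMorphism Λ₀ Λ₁ ζ)
    (h₁₂ : IsMorphism Λ₁ Λ₂ η) : IsMorphism Λ₀ Λ₂ (ζ * η) := by
  intro x y γ
  calc Λ₀.val γ * Λ₂.val γ = Λ₀.val γ * (Λ₁.val γ * Λ₁.val γ) * Λ₂.val γ := by
        rw [Int.units_mul_self, mul_one]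
    _ = (ζ x * ζ y) * (η x * η y) := by rw [← h₀₁, ← h₁₂, mul_assoc, mul_assoc, mul_assoc]
    _ = (ζ * η) x * (ζ * η) y := mul_mul_mul_comm _ _ _ _

/-- `seg p ⬝ μ` and `(μ pushed down to height 0) ⬝ seg q` have homotopic shadows in `X`, hence
are homotopic since `I` is simply connected. -/
theorem isMorphism_seg (Λ : ZtSystem (X × I)) :
    IsMorphism (Λ.pullback ((ContinuousMap.fst).prodMk (ContinuousMap.const _ 0))) Λ
      (fun p => Λ.val (Path.seg p.1 p.2)) := by
  intro p q μ
  have hfst : (((Path.seg p.1 p.2).trans μ).map continuous_fst).Homotopic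
      ((((μ.map continuous_fst).prod (Path.refl 0)).trans (Path.seg q.1 q.2)).map
        continuous_fst) := by
    rw [Path.map_trans, Path.map_trans,
      show (Path.seg p.1 p.2).map continuous_fst = Path.refl p.1 from Path.ext rfl,
      show (Path.seg q.1 q.2).map continuous_fst = Path.refl q.1 from Path.ext rfl]
    exact (Path.Homotopic.refl_trans _).trans (Path.Homotopic.trans_refl _).symm
  have hsquare := Λ.homotopic_eq (Path.Homotopic.of_map_fst hfst)
  rw [Λ.trans_eq, Λ.trans_eq] at hsquare
  exact Int.units_mul_eq_mul_swap hsquare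

theorem val_vert_pullback_eq [PathConnectedSpace X] (Λ : ZtSystem Y) (F : C(X × I, Y))
    (hF : ∀ x, F (x, 0) = F (x, 1)) (x y : X) :
    (Λ.pullback F).val (Path.vert x) = (Λ.pullback F).val (Path.vert y) := by
  obtain ⟨γ⟩ := PathConnectedSpace.joined x y
  have hsquare := (Λ.pullback F).isMorphism_seg (γ.prod (Path.refl 1))
  change Λ.val ((γ.prod (Path.refl 0)).map F.continuous) *
    Λ.val ((γ.prod (Path.refl 1)).map F.continuous) = _ at hsquare
  rw [Λ.val_congr (hF x) (hF y) _ ((γ.prod (Path.refl 1)).map F.continuous) fun t => hF (γ t),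
    Int.units_mul_self] at hsquare
  rw [← Path.seg_one, ← Path.seg_one]
  exact (eq_inv_of_mul_eq_one_left hsquare.symm).trans (Int.units_inv_eq_self _)

end ZtSystem

def ZtHom.ofHomotopy {A B : ZtTop} (m : A ⟶ B) (F : C(A.carrier × I, B.carrier))
    (hF0 : ∀ x, F (x, 0) = m.f x) : A.prodI ⟶ B where
  f := F
  ζ p := m.ζ p.1 * (B.lam.pullback F).val (Path.seg p.1 p.2)
  isMor := by
    have hbottom : (B.lam.pullback F).pullback
        ((ContinuousMap.fst : C(A.carrier × I, A.carrier)).prodMk (ContinuousMap.const _ 0)) =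
        (B.lam.pullback m.f).pullback ContinuousMap.fst := by
      rw [ZtSystem.pullback_pullback, ZtSystem.pullback_pullback]
      congr 1
      exact ContinuousMap.ext fun p => hF0 p.1
    intro p q μ
    exact ZtSystem.IsMorphism.trans (ZtSystem.IsMorphism.pullback m.isMor ContinuousMap.fst)
      (hbottom ▸ (B.lam.pullback F).isMorphism_seg) μ

namespace ZtHom

variable {A B : ZtTop} (m : A ⟶ B) (F : C(A.carrier × I, B.carrier)) (hF0 : ∀ x, F (x, 0) = m.f x)

theorem iota_zero_comp_ofHomotopy : A.iota 0 ≫ ofHomotopy m F hF0 = m := by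
  refine ZtHom.ext (ContinuousMap.ext hF0) (funext fun x => ?_)
  change m.ζ x * (B.lam.pullback F).val (Path.seg x 0) * 1 = m.ζ x
  rw [Path.seg_zero, ZtSystem.refl_eq, mul_one, mul_one]

theorem iota_one_comp_ofHomotopy (hF1 : ∀ x, F (x, 1) = m.f x)
    (hloop : ∀ x, (B.lam.pullback F).val (Path.vert x) = -1) :
    A.iota 1 ≫ ofHomotopy m F hF0 = A.negId ≫ m := by
  refine ZtHom.ext (ContinuousMap.ext hF1) (funext fun x => ?_)
  change m.ζ x * (B.lam.pullback F).val (Path.seg x 1) * 1 = m.ζ x * -1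
  rw [Path.seg_one, hloop, mul_one]

end ZtHom

theorem ZtTop.iota_comp_proj (A : ZtTop) (t : I) : A.iota t ≫ A.proj = 𝟙 A :=
  ZtHom.ext rfl (funext fun _ => mul_one 1)

theorem IsHomotopyFunctor.map_iota_eq {D : Type*} [Category D] {Ω : Functor ZtTop D}
    (hΩ : IsHomotopyFunctor Ω) (A : ZtTop) (t : I) : Ω.map (A.iota t) = Ω.map (A.iota 0) :=
  calc Ω.map (A.iota t) = Ω.map (A.iota t) ≫ Ω.map A.proj ≫ Ω.map (A.iota 0) := by
        rw [hΩ A, Category.comp_id]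
    _ = Ω.map (A.iota 0) := by
        rw [← Category.assoc, ← Ω.map_comp, ZtTop.iota_comp_proj, Ω.map_id, Category.id_comp]

open CategoryTheory in
/-- Geometric form of Taylor's lemma: if `Ω` is a homotopy functor,
`(f,ζ) : (X,Λ_X) → (Y,Λ_Y)` with `X` path connected, `F` is a self-homotopy of
`f` and `L` is the loop `t ↦ F(x,t)`, then `Ω(f,ζ) = Ω(f,ζ) ∘ Ω(1_X, -1)` when
`Λ_Y(L) = -1`, and trivially `Ω(f,ζ) = Ω(f,ζ) ∘ Ω(1_X, 1)` when `Λ_Y(L) = 1`. -/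
theorem taylors_lemma_geometric {D : Type*} [Category D]
    (Ω : Functor ZtTop D) (hΩ : IsHomotopyFunctor Ω)
    (A B : ZtTop) [PathConnectedSpace A.carrier] (m : A ⟶ B)
    (F : C(A.carrier × I, B.carrier))
    (hF0 : ∀ x : A.carrier, F (x, 0) = ZtHom.f m x)
    (hF1 : ∀ x : A.carrier, F (x, 1) = ZtHom.f m x)
    (x : A.carrier) :
    (B.lam.val (((Path.vert x).map F.continuous).cast (hF0 x).symm (hF1 x).symm) = -1 →
      Ω.map A.negId ≫ Ω.map m = Ω.map m) ∧
    (B.lam.val (((Path.vert x).map F.continuous).cast (hF0 x).symm (hF1 x).symm) = 1 →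
      Ω.map (𝟙 A) ≫ Ω.map m = Ω.map m) := by
  refine ⟨fun hL => ?_, fun _ => by rw [Ω.map_id, Category.id_comp]⟩
  have hloop (y : A.carrier) : (B.lam.pullback F).val (Path.vert y) = -1 := by
    rw [ZtSystem.val_vert_pullback_eq B.lam F (fun z => (hF0 z).trans (hF1 z).symm) y x, ← hL]
    exact B.lam.val_congr (hF0 x) (hF1 x) _ _ fun _ => rfl
  rw [← Ω.map_comp, ← ZtHom.iota_one_comp_ofHomotopy m F hF0 hF1 hloop, Ω.map_comp,
    hΩ.map_iota_eq, ← Ω.map_comp, ZtHom.iota_zero_comp_ofHomotopy]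
end
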